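/- arXiv:1603.09275 — 2 statements merged into one kernel-verified Lean document; each statement's English description precedes it below -/
import Mathlib

section
/- In an E-unitary inverse semigroup S possessing a least idempotent e, the kernel J_e equals the maximal subgroup H_e and is isomorphic to the maximal group image S/σ. -/
inductive InvGen {S : Type*} [Mul S] [Inv S] (X : Set S) : S → Prop
  | base {x : S} : x ∈ X → InvGen X x
  | mul {a b : S} : InvGen X a → InvGen X b → InvGen X (a * b)
  | inv {a : S} : InvGen X a → InvGen X a⁻¹

def IsInvSub {S : Type*} [Mul S] [Inv S] (T : Set S) : Prop :=
  (∀ a ∈ T, ∀ b ∈ T, a * b ∈ T) ∧ ∀ a ∈ T, a⁻¹ ∈ T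

def InvFG {S : Type*} [Mul S] [Inv S] (T : Set S) : Prop :=
  ∃ X : Finset S, ↑X ⊆ T ∧ T = {s | InvGen (↑X : Set S) s}

def Howson (S : Type*) [Mul S] [Inv S] : Prop :=
  ∀ U V : Set S, IsInvSub U → IsInvSub V → InvFG U → InvFG V → InvFG (U ∩ V)
class InverseSemigroup (S : Type*) extends Semigroup S, Inv S where
  mul_inv_mul : ∀ a : S, a * a⁻¹ * a = a
  inv_invol : ∀ a : S, a⁻¹⁻¹ = a
  idem_comm : ∀ a b : S, (a * a⁻¹) * (b * b⁻¹) = (b * b⁻¹) * (a * a⁻¹)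

def Idl {S : Type*} [Semigroup S] (a : S) : Set S :=
  {a} ∪ {x | ∃ s, s * a = x} ∪ {x | ∃ s, a * s = x} ∪ {x | ∃ s t, s * a * t = x}

def Jrel {S : Type*} [Semigroup S] (a b : S) : Prop := Idl a = Idl b

def Jcl {S : Type*} [Semigroup S] (a : S) : Set S := {b | Jrel a b}

/-!
Let `e` be the least idempotent. For every `s`, `s * e * s⁻¹` is an idempotent, hence lies above `e`,
and conjugating back by `s⁻¹` shows `s * e * s⁻¹ = e`. Consequently the group `H_e = {s | s s⁻¹ = e = s⁻¹ s}`
is a two-sided ideal containing `e`, so it contains the principal ideal of `e`, and it equals the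
`𝒥`-class of `e`. A morphism `f` onto a group whose kernel is `σ` is injective on `H_e`, because
every idempotent `g` satisfies `e * g = e` while `e` is an identity on `H_e`; it is surjective on
`H_e` because `s * e ∈ H_e` and `f (s * e) = f s`.
-/

section Ideal

variable {S : Type*} [Semigroup S]

theorem mem_Idl_iff {a x : S} :
    x ∈ Idl a ↔ x = a ∨ (∃ s, s * a = x) ∨ (∃ s, a * s = x) ∨ ∃ s t, s * a * t = x := by
  simp only [Idl, Set.mem_union, Set.mem_singleton_iff, Set.mem_ofPred_eq, or_assoc]

theorem self_mem_Idl (a : S) : a ∈ Idl a :=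
  mem_Idl_iff.mpr (Or.inl rfl)

theorem Idl_subset {a : S} {T : Set S} (ha : a ∈ T) (hleft : ∀ s x, x ∈ T → s * x ∈ T)
    (hright : ∀ x s, x ∈ T → x * s ∈ T) : Idl a ⊆ T := by
  intro x hx
  rcases mem_Idl_iff.mp hx with rfl | ⟨s, rfl⟩ | ⟨s, rfl⟩ | ⟨s, t, rfl⟩
  · exact ha
  · exact hleft s a ha
  · exact hright a s ha
  · exact hright _ t (hleft s a ha)

theorem mul_mem_Idl_left {b x : S} (s : S) (hx : x ∈ Idl b) : s * x ∈ Idl b := by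
  rw [mem_Idl_iff] at hx ⊢
  rcases hx with rfl | ⟨t, rfl⟩ | ⟨t, rfl⟩ | ⟨t, u, rfl⟩
  · exact Or.inr (Or.inl ⟨s, rfl⟩)
  · exact Or.inr (Or.inl ⟨s * t, mul_assoc _ _ _⟩)
  · exact Or.inr (Or.inr (Or.inr ⟨s, t, mul_assoc _ _ _⟩))
  · exact Or.inr (Or.inr (Or.inr ⟨s * t, u, by simp only [mul_assoc]⟩))

theorem mul_mem_Idl_right {b x : S} (s : S) (hx : x ∈ Idl b) : x * s ∈ Idl b := by
  rw [mem_Idl_iff] at hx ⊢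
  rcases hx with rfl | ⟨t, rfl⟩ | ⟨t, rfl⟩ | ⟨t, u, rfl⟩
  · exact Or.inr (Or.inr (Or.inl ⟨s, rfl⟩))
  · exact Or.inr (Or.inr (Or.inr ⟨t, s, rfl⟩))
  · exact Or.inr (Or.inr (Or.inl ⟨t * s, (mul_assoc _ _ _).symm⟩))
  · exact Or.inr (Or.inr (Or.inr ⟨t, u * s, by simp only [mul_assoc]⟩))

theorem Idl_subset_of_mem {a b : S} (h : a ∈ Idl b) : Idl a ⊆ Idl b :=
  Idl_subset h (fun s _ => mul_mem_Idl_left s) (fun _ s => mul_mem_Idl_right s)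

theorem Jrel_of_mem_Idl {a b : S} (hab : a ∈ Idl b) (hba : b ∈ Idl a) : Jrel a b :=
  (Idl_subset_of_mem hab).antisymm (Idl_subset_of_mem hba)

end Ideal

namespace InverseSemigroup

variable {S : Type*} [InverseSemigroup S]

theorem inv_mul_mul_inv (a : S) : a⁻¹ * a * a⁻¹ = a⁻¹ := by
  simpa only [inv_invol] using mul_inv_mul a⁻¹

theorem isIdempotentElem_mul_inv (a : S) : IsIdempotentElem (a * a⁻¹) := by
  rw [IsIdempotentElem, ← mul_assoc, mul_inv_mul]

theorem isIdempotentElem_inv_mul (a : S) : IsIdempotentElem (a⁻¹ * a) := by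
  simpa only [inv_invol] using isIdempotentElem_mul_inv a⁻¹

theorem inv_eq_self_of_isIdempotentElem {f : S} (hf : IsIdempotentElem f) : f⁻¹ = f := by
  have hcomm : f * f⁻¹ * (f⁻¹ * f) = f⁻¹ * f * (f * f⁻¹) := by
    simpa only [inv_invol] using idem_comm f f⁻¹
  have hf' : f⁻¹ * f * (f * f⁻¹) = f⁻¹ := by
    rw [mul_assoc, ← mul_assoc f f f⁻¹, hf.eq, ← mul_assoc, inv_mul_mul_inv]
  have hfX : f * (f * f⁻¹ * (f⁻¹ * f)) = f * f⁻¹ * (f⁻¹ * f) := by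
    rw [← mul_assoc, ← mul_assoc f f, hf.eq]
  have hXf : f * f⁻¹ * (f⁻¹ * f) * f = f * f⁻¹ * (f⁻¹ * f) := by
    rw [mul_assoc _ (f⁻¹ * f), mul_assoc f⁻¹, hf.eq]
  calc f⁻¹ = f * f⁻¹ * (f⁻¹ * f) := (hcomm.trans hf').symm
    _ = f * (f * f⁻¹ * (f⁻¹ * f)) * f := by rw [hfX, hXf]
    _ = f := by rw [hcomm, hf', mul_inv_mul]

theorem commute_of_isIdempotentElem {f g : S} (hf : IsIdempotentElem f)
    (hg : IsIdempotentElem g) : f * g = g * f := by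
  simpa only [inv_eq_self_of_isIdempotentElem hf, inv_eq_self_of_isIdempotentElem hg, hf.eq,
    hg.eq] using idem_comm f g

theorem eq_of_isInverse {a x y : S} (hax : a * x * a = a) (hxa : x * a * x = x)
    (hay : a * y * a = a) (hya : y * a * y = y) : x = y := by
  have iax : IsIdempotentElem (a * x) := by rw [IsIdempotentElem, ← mul_assoc, hax]
  have ixa : IsIdempotentElem (x * a) := by rw [IsIdempotentElem, ← mul_assoc, hxa]
  have iay : IsIdempotentElem (a * y) := by rw [IsIdempotentElem, ← mul_assoc, hay]
  have iya : IsIdempotentElem (y * a) := by rw [IsIdempotentElem, ← mul_assoc, hya]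
  have hx : x = x * a * y :=
    calc x = x * (a * y * a) * x := by rw [hay, hxa]
      _ = x * ((a * y) * (a * x)) := by simp only [mul_assoc]
      _ = x * ((a * x) * (a * y)) := by rw [commute_of_isIdempotentElem iay iax]
      _ = (x * a * x) * (a * y) := by simp only [mul_assoc]
      _ = x * a * y := by rw [hxa, mul_assoc]
  have hy : y = x * a * y :=
    calc y = y * (a * x * a) * y := by rw [hax, hya]
      _ = ((y * a) * (x * a)) * y := by simp only [mul_assoc]
      _ = ((x * a) * (y * a)) * y := by rw [commute_of_isIdempotentElem iya ixa]
      _ = x * a * y := by rw [mul_assoc (x * a), hya]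
  exact hx.trans hy.symm

protected theorem mul_inv_rev (a b : S) : (a * b)⁻¹ = b⁻¹ * a⁻¹ := by
  have hcomm : b * b⁻¹ * (a⁻¹ * a) = a⁻¹ * a * (b * b⁻¹) :=
    commute_of_isIdempotentElem (isIdempotentElem_mul_inv b) (isIdempotentElem_inv_mul a)
  refine eq_of_isInverse (mul_inv_mul (a * b)) (inv_mul_mul_inv (a * b)) ?_ ?_
  · calc a * b * (b⁻¹ * a⁻¹) * (a * b) = a * (b * b⁻¹ * (a⁻¹ * a)) * b := by
          simp only [mul_assoc]
      _ = a * a⁻¹ * a * (b * b⁻¹ * b) := by rw [hcomm]; simp only [mul_assoc]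
      _ = a * b := by rw [mul_inv_mul, mul_inv_mul]
  · calc b⁻¹ * a⁻¹ * (a * b) * (b⁻¹ * a⁻¹) = b⁻¹ * (a⁻¹ * a * (b * b⁻¹)) * a⁻¹ := by
          simp only [mul_assoc]
      _ = b⁻¹ * b * b⁻¹ * (a⁻¹ * a * a⁻¹) := by rw [← hcomm]; simp only [mul_assoc]
      _ = b⁻¹ * a⁻¹ := by rw [inv_mul_mul_inv, inv_mul_mul_inv]

theorem isIdempotentElem_conj (s : S) {f : S} (hf : IsIdempotentElem f) :
    IsIdempotentElem (s * f * s⁻¹) :=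
  calc s * f * s⁻¹ * (s * f * s⁻¹) = s * (f * (s⁻¹ * s) * f) * s⁻¹ := by simp only [mul_assoc]
    _ = s * s⁻¹ * s * (f * f) * s⁻¹ := by
      rw [commute_of_isIdempotentElem hf (isIdempotentElem_inv_mul s)]; simp only [mul_assoc]
    _ = s * f * s⁻¹ := by rw [mul_inv_mul, hf.eq]

theorem inv_conj_least {e : S} (he : IsIdempotentElem e)
    (hleast : ∀ f : S, IsIdempotentElem f → e * f = e) (s : S) : s⁻¹ * e * s = e := by
  have hconj : e * (s * e * s⁻¹) = e := hleast _ (isIdempotentElem_conj s he)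
  have hinvConj : IsIdempotentElem (s⁻¹ * e * s) := by
    simpa only [inv_invol] using isIdempotentElem_conj s⁻¹ he
  calc s⁻¹ * e * s = s⁻¹ * (e * (s * e * s⁻¹)) * s := by rw [hconj]
    _ = s⁻¹ * e * s * (e * (s⁻¹ * s)) := by simp only [mul_assoc]
    _ = e * (s⁻¹ * e * s) := by
      rw [hleast _ (isIdempotentElem_inv_mul s), commute_of_isIdempotentElem hinvConj he]
    _ = e := hleast _ hinvConj

theorem conj_least {e : S} (he : IsIdempotentElem e)
    (hleast : ∀ f : S, IsIdempotentElem f → e * f = e) (s : S) : s * e * s⁻¹ = e := by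
  simpa only [inv_invol] using inv_conj_least he hleast s⁻¹

/-- The `ℋ`-class `H_e` of an idempotent `e`. -/
def maxSubgroup (e : S) : Set S := {s | s * s⁻¹ = e ∧ s⁻¹ * s = e}

theorem mem_maxSubgroup_self {e : S} (he : IsIdempotentElem e) : e ∈ maxSubgroup e := by
  simp only [maxSubgroup, Set.mem_ofPred_eq, inv_eq_self_of_isIdempotentElem he, he.eq, and_self]

theorem inv_mem_maxSubgroup {e a : S} (ha : a ∈ maxSubgroup e) : a⁻¹ ∈ maxSubgroup e :=
  ⟨by rw [inv_invol]; exact ha.2, by rw [inv_invol]; exact ha.1⟩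

theorem idem_mul_of_mem_maxSubgroup {e a : S} (ha : a ∈ maxSubgroup e) : e * a = a := by
  rw [← ha.1, mul_inv_mul]

theorem mul_mem_maxSubgroup_left {e : S} (he : IsIdempotentElem e)
    (hleast : ∀ f : S, IsIdempotentElem f → e * f = e) (s : S) {a : S}
    (ha : a ∈ maxSubgroup e) : s * a ∈ maxSubgroup e := by
  constructor
  · calc s * a * (s * a)⁻¹ = s * (a * a⁻¹) * s⁻¹ := by
          rw [InverseSemigroup.mul_inv_rev]; simp only [mul_assoc]
      _ = e := by rw [ha.1, conj_least he hleast]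
  · calc (s * a)⁻¹ * (s * a) = a⁻¹ * (s⁻¹ * s) * (e * a) := by
          rw [InverseSemigroup.mul_inv_rev, idem_mul_of_mem_maxSubgroup ha]; simp only [mul_assoc]
      _ = a⁻¹ * e * a := by
          rw [← mul_assoc, mul_assoc a⁻¹,
            commute_of_isIdempotentElem (isIdempotentElem_inv_mul s) he,
            hleast _ (isIdempotentElem_inv_mul s)]
      _ = e := by rw [mul_assoc, idem_mul_of_mem_maxSubgroup ha, ha.2]

theorem mul_mem_maxSubgroup_right {e : S} (he : IsIdempotentElem e)
    (hleast : ∀ f : S, IsIdempotentElem f → e * f = e) (s : S) {a : S}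
    (ha : a ∈ maxSubgroup e) : a * s ∈ maxSubgroup e := by
  simpa only [InverseSemigroup.mul_inv_rev, inv_invol] using
    inv_mem_maxSubgroup (mul_mem_maxSubgroup_left he hleast s⁻¹ (inv_mem_maxSubgroup ha))

theorem Jcl_eq_maxSubgroup_of_least {e : S} (he : IsIdempotentElem e)
    (hleast : ∀ f : S, IsIdempotentElem f → e * f = e) : Jcl e = maxSubgroup e := by
  ext a
  constructor
  · intro hJ
    have ha : a ∈ Idl e := by rw [show Idl e = Idl a from hJ]; exact self_mem_Idl a
    exact Idl_subset (mem_maxSubgroup_self he) (fun s _ => mul_mem_maxSubgroup_left he hleast s)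
      (fun _ s => mul_mem_maxSubgroup_right he hleast s) ha
  · intro ha
    refine Jrel_of_mem_Idl ?_ ?_
    · exact ha.1 ▸ mul_mem_Idl_right a⁻¹ (self_mem_Idl a)
    · exact idem_mul_of_mem_maxSubgroup ha ▸ mul_mem_Idl_right a (self_mem_Idl e)

theorem injOn_maxSubgroup {e : S} (hleast : ∀ f : S, IsIdempotentElem f → e * f = e)
    {G : Type*} {f : S → G} (hker : ∀ a b, f a = f b → ∃ g, IsIdempotentElem g ∧ g * a = g * b) :
    Set.InjOn f (maxSubgroup e) := by
  intro a ha b hb hab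
  obtain ⟨g, hg, hgab⟩ := hker a b hab
  calc a = e * (g * a) := by rw [← mul_assoc, hleast g hg, idem_mul_of_mem_maxSubgroup ha]
    _ = e * (g * b) := by rw [hgab]
    _ = b := by rw [← mul_assoc, hleast g hg, idem_mul_of_mem_maxSubgroup hb]

theorem surjOn_maxSubgroup {e : S} (he : IsIdempotentElem e)
    (hleast : ∀ f : S, IsIdempotentElem f → e * f = e) {G : Type*} [Group G] {f : S → G}
    (hmul : ∀ a b, f (a * b) = f a * f b) (hsurj : Function.Surjective f) :
    Set.SurjOn f (maxSubgroup e) Set.univ := by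
  have hfe : f e = 1 := IsIdempotentElem.iff_eq_one.mp (by rw [IsIdempotentElem, ← hmul, he.eq])
  rintro x -
  obtain ⟨s, rfl⟩ := hsurj x
  exact ⟨s * e, mul_mem_maxSubgroup_left he hleast s (mem_maxSubgroup_self he),
    by rw [hmul, hfe, mul_one]⟩

end InverseSemigroup

open InverseSemigroup in
theorem stmt_7_general {S : Type*} [InverseSemigroup S]
    (e : S) (he : e * e = e) (hleast : ∀ f : S, f * f = f → e * f = e)
    (G : Type*) [Group G] (f : S → G)
    (hhom : ∀ a b : S, f (a * b) = f a * f b)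
    (hsurj : Function.Surjective f)
    (hker : ∀ a b : S, f a = f b ↔ ∃ g : S, g * g = g ∧ g * a = g * b) :
    Jcl e = {s : S | s * s⁻¹ = e ∧ s⁻¹ * s = e} ∧
      Set.BijOn f {s : S | s * s⁻¹ = e ∧ s⁻¹ * s = e} Set.univ :=
  ⟨Jcl_eq_maxSubgroup_of_least he hleast, Set.mapsTo_univ _ _,
    injOn_maxSubgroup hleast fun a b => (hker a b).mp, surjOn_maxSubgroup he hleast hhom hsurj⟩

theorem stmt_7 {S : Type*} [InverseSemigroup S]
    (hEunitary : ∀ e s : S, e * e = e → (e * s) * (e * s) = e * s → s * s = s)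
    (e : S) (he : e * e = e) (hleast : ∀ f : S, f * f = f → e * f = e)
    (G : Type*) [Group G] (f : S → G)
    (hhom : ∀ a b : S, f (a * b) = f a * f b)
    (hsurj : Function.Surjective f)
    (hker : ∀ a b : S, f a = f b ↔ ∃ g : S, g * g = g ∧ g * a = g * b) :
    Jcl e = {s : S | s * s⁻¹ = e ∧ s⁻¹ * s = e} ∧
      Set.BijOn f {s : S | s * s⁻¹ = e ∧ s⁻¹ * s = e} Set.univ :=
  stmt_7_general e he hleast G f hhom hsurj hker
end

section
/- The bicyclic semigroup has the Howson property: the intersection of any two finitely generated inverse subsemigroups of the bicyclic semigroup is finitely generated. -/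
def Bicyclic := ℕ × ℕ

instance : Mul Bicyclic :=
  ⟨fun a b => ((a.1 + b.1 - min a.2 b.1, a.2 + b.2 - min a.2 b.1) : ℕ × ℕ)⟩

instance : Inv Bicyclic := ⟨fun a => ((a.2, a.1) : ℕ × ℕ)⟩


/-!
Let `T` be an inverse subsemigroup of the bicyclic semigroup containing some `(a, b)` with `a < b`.
Let `d` be the least positive difference `b - a` occurring in `T` and `m` the least `a` with
`(m, m + d) ∈ T`; powers of `(a, b)` show that every `(a, b) ∈ T` with `a < b` has `m ≤ a`.
Multiplying by `(m, m + d)` or its inverse shifts a coordinate by `d`, so every element of `T`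
with a coordinate `≥ m + 2d` is a product of two elements of `T` of smaller weight `a + b`.
Hence the finitely many elements of `T` in the box `[0, m + 2d)²` generate `T`.

Idempotents of the bicyclic semigroup form a chain, so a finitely generated inverse subsemigroup
of idempotents is finite. Hence if `U ∩ V` is infinite, `U` and `V` contain non-idempotents
`(x, x + k)` and `(y, y + l)`, and `U ∩ V` contains an idempotent `(u, u)` with `u ≥ x + y`.
Then `(u, u + k) ∈ U` and `(u, u + l) ∈ V`, so `(u, u + k l) ∈ U ∩ V`.
-/

section General

variable {S : Type*} [Mul S] [Inv S]

theorem IsInvSub.mul_mem {T : Set S} (hT : IsInvSub T) {s t : S} (hs : s ∈ T) (ht : t ∈ T) :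
    s * t ∈ T :=
  hT.1 s hs t ht

theorem IsInvSub.inv_mem {T : Set S} (hT : IsInvSub T) {s : S} (hs : s ∈ T) : s⁻¹ ∈ T :=
  hT.2 s hs

theorem IsInvSub.inter {U V : Set S} (hU : IsInvSub U) (hV : IsInvSub V) : IsInvSub (U ∩ V) :=
  ⟨fun _ hs _ ht => ⟨hU.mul_mem hs.1 ht.1, hV.mul_mem hs.2 ht.2⟩,
    fun _ hs => ⟨hU.inv_mem hs.1, hV.inv_mem hs.2⟩⟩

theorem InvGen.mem {X T : Set S} (hT : IsInvSub T) (hXT : X ⊆ T) {s : S} (h : InvGen X s) :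
    s ∈ T := by
  induction h with
  | base hs => exact hXT hs
  | mul _ _ ihs iht => exact hT.mul_mem ihs iht
  | inv _ ih => exact hT.inv_mem ih

theorem InvGen.of_forall_eq_mul {X T : Set S} (f : S → ℕ)
    (h : ∀ s ∈ T, s ∉ X → ∃ t ∈ T, ∃ u ∈ T, f t < f s ∧ f u < f s ∧ s = t * u) :
    ∀ s ∈ T, InvGen X s := by
  intro s
  induction hn : f s using Nat.strong_induction_on generalizing s with
  | _ n ih =>
    intro hs
    by_cases hsX : s ∈ X
    · exact .base hsX
    · obtain ⟨t, ht, u, hu, htf, huf, rfl⟩ := h _ hs hsX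
      exact .mul (ih _ (hn ▸ htf) t rfl ht) (ih _ (hn ▸ huf) u rfl hu)

theorem invFG_of_forall_invGen {X T : Set S} (hT : IsInvSub T) (hX : X.Finite) (hXT : X ⊆ T)
    (h : ∀ s ∈ T, InvGen X s) : InvFG T := by
  refine ⟨hX.toFinset, by simpa using hXT, Set.ext fun s => ⟨fun hs => ?_, fun hs => ?_⟩⟩
  · simpa using h s hs
  · exact InvGen.mem hT hXT (by simpa using hs)

theorem invFG_of_finite {T : Set S} (hT : IsInvSub T) (h : T.Finite) : InvFG T :=
  invFG_of_forall_invGen hT h subset_rfl fun _ => .base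

end General

namespace Bicyclic

-- `((a, b) : Bicyclic)` elaborates at type `ℕ × ℕ`, whose `*` is the componentwise product.
def mk (a b : ℕ) : Bicyclic := (a, b)

theorem exists_eq_mk (s : Bicyclic) : ∃ a b, s = mk a b :=
  ⟨Prod.fst s, Prod.snd s, rfl⟩

theorem mk_mul_mk (a b c d : ℕ) : mk a b * mk c d = mk (a + c - min b c) (b + d - min b c) :=
  rfl

theorem mk_inv (a b : ℕ) : (mk a b)⁻¹ = mk b a :=
  rfl

theorem mk_mul_mk_eq {a b c d x y : ℕ} (hx : a + c - min b c = x) (hy : b + d - min b c = y) :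
    mk a b * mk c d = mk x y := by
  rw [mk_mul_mk, hx, hy]

theorem mul_inv_rev (s t : Bicyclic) : (s * t)⁻¹ = t⁻¹ * s⁻¹ := by
  obtain ⟨a, b, rfl⟩ := exists_eq_mk s
  obtain ⟨c, d, rfl⟩ := exists_eq_mk t
  rw [mk_mul_mk, mk_inv, mk_inv, mk_inv]
  exact (mk_mul_mk_eq (by omega) (by omega)).symm

def weight (s : Bicyclic) : ℕ := Prod.fst s + Prod.snd s

theorem weight_mk (a b : ℕ) : weight (mk a b) = a + b :=
  rfl

theorem weight_inv (s : Bicyclic) : weight s⁻¹ = weight s :=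
  Nat.add_comm _ _

variable {T : Set Bicyclic}

theorem mk_mul_mk_mem (hT : IsInvSub T) {a b c d x y : ℕ}
    (h₁ : mk a b ∈ T) (h₂ : mk c d ∈ T)
    (hx : a + c - min b c = x) (hy : b + d - min b c = y) : mk x y ∈ T :=
  mk_mul_mk_eq hx hy ▸ hT.mul_mem h₁ h₂

theorem mk_swap_mem (hT : IsInvSub T) {a b : ℕ} (h : mk a b ∈ T) : mk b a ∈ T :=
  hT.inv_mem h

theorem mk_self_mem_left (hT : IsInvSub T) {a b : ℕ} (h : mk a b ∈ T) : mk a a ∈ T :=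
  mk_mul_mk_mem hT h (mk_swap_mem hT h) (by omega) (by omega)

theorem mk_self_mem_right (hT : IsInvSub T) {a b : ℕ} (h : mk a b ∈ T) : mk b b ∈ T :=
  mk_self_mem_left hT (mk_swap_mem hT h)

theorem mk_add_mul_mem (hT : IsInvSub T) {a j : ℕ} (h : mk a (a + j) ∈ T) {n : ℕ}
    (hn : 0 < n) : mk a (a + n * j) ∈ T := by
  induction n, hn using Nat.le_induction with
  | base => simpa using h
  | succ n _ ih => exact mk_mul_mk_mem hT ih h (by omega) (by rw [Nat.succ_mul]; omega)

theorem mk_add_mem_of_le (hT : IsInvSub T) {a b c d : ℕ} (hab : mk a b ∈ T)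
    (hcd : mk c (c + d) ∈ T) (hcb : c ≤ b) : mk a (a + d) ∈ T := by
  have h : mk a (b + d) ∈ T := mk_mul_mk_mem hT hab hcd (by omega) (by omega)
  exact mk_swap_mem hT (mk_mul_mk_mem hT hab (mk_swap_mem hT h) (by omega) (by omega))

theorem exists_mk_self_mem_of_infinite (hT : IsInvSub T) (hinf : T.Infinite) (n : ℕ) :
    ∃ u, n ≤ u ∧ mk u u ∈ T := by
  obtain ⟨s, hs, hsn⟩ := hinf.exists_notMem_finite
    ((Set.finite_Iio n).prod (Set.finite_Iio n) : (Set.Iio n ×ˢ Set.Iio n : Set Bicyclic).Finite)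
  obtain ⟨a, b, rfl⟩ := exists_eq_mk s
  by_cases ha : n ≤ a
  · exact ⟨a, ha, mk_self_mem_left hT hs⟩
  · exact ⟨b, by by_contra hb; exact hsn ⟨(by omega : a < n), (by omega : b < n)⟩,
      mk_self_mem_right hT hs⟩

theorem isInvSub_of_forall_eq (X : Set Bicyclic) (h : ∀ a b, mk a b ∈ X → a = b) :
    IsInvSub X := by
  refine ⟨fun s hs t ht => ?_, fun s hs => ?_⟩
  · obtain ⟨a, a', rfl⟩ := exists_eq_mk s
    obtain ⟨b, b', rfl⟩ := exists_eq_mk t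
    obtain rfl := h _ _ hs
    obtain rfl := h _ _ ht
    rcases le_total a b with hab | hab
    · rwa [mk_mul_mk_eq (x := b) (y := b) (by omega) (by omega)]
    · rwa [mk_mul_mk_eq (x := a) (y := a) (by omega) (by omega)]
  · obtain ⟨a, a', rfl⟩ := exists_eq_mk s
    obtain rfl := h _ _ hs
    exact hs

theorem exists_lt_of_invFG_of_infinite (hT : IsInvSub T) (hFG : InvFG T) (hinf : T.Infinite) :
    ∃ a b, a < b ∧ mk a b ∈ T := by
  by_contra! h
  have hidem : ∀ a b, mk a b ∈ T → a = b := fun a b hab => by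
    rcases lt_trichotomy a b with hlt | heq | hgt
    · exact absurd hab (h a b hlt)
    · exact heq
    · exact absurd (mk_swap_mem hT hab) (h b a hgt)
  obtain ⟨X, hXT, rfl⟩ := hFG
  have hX : IsInvSub (X : Set Bicyclic) :=
    isInvSub_of_forall_eq _ fun a b hab => hidem a b (hXT hab)
  exact hinf (X.finite_toSet.subset fun _ hs => InvGen.mem hX subset_rfl hs)

theorem exists_lt_mem_inter_of_infinite {U V : Set Bicyclic} (hU : IsInvSub U) (hV : IsInvSub V)
    (hUlt : ∃ a b, a < b ∧ mk a b ∈ U) (hVlt : ∃ a b, a < b ∧ mk a b ∈ V)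
    (hinf : (U ∩ V).Infinite) : ∃ a b, a < b ∧ mk a b ∈ U ∩ V := by
  obtain ⟨x, x', hx, hxU⟩ := hUlt
  obtain ⟨y, y', hy, hyV⟩ := hVlt
  obtain ⟨u, hu, huU, huV⟩ := exists_mk_self_mem_of_infinite (hU.inter hV) hinf (x + y)
  have hkU : mk u (u + (x' - x)) ∈ U := mk_mul_mk_mem hU huU hxU (by omega) (by omega)
  have hlV : mk u (u + (y' - y)) ∈ V := mk_mul_mk_mem hV huV hyV (by omega) (by omega)
  have hlk : 0 < (y' - y) * (x' - x) := Nat.mul_pos (by omega) (by omega)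
  refine ⟨u, u + (y' - y) * (x' - x), by omega, mk_add_mul_mem hU hkU (by omega), ?_⟩
  rw [Nat.mul_comm]
  exact mk_add_mul_mem hV hlV (by omega)

theorem exists_minimal (hT : IsInvSub T) {p q : ℕ} (hpq : p < q) (h : mk p q ∈ T) :
    ∃ m d, 0 < d ∧ mk m (m + d) ∈ T ∧
      ∀ a b, mk a b ∈ T → a < b → m ≤ a ∧ a + d ≤ b := by
  classical
  have hd : ∃ d, 0 < d ∧ ∃ a, mk a (a + d) ∈ T :=
    ⟨q - p, by omega, p, by rwa [Nat.add_sub_cancel' hpq.le]⟩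
  obtain ⟨hd_pos, c, hc⟩ := Nat.find_spec hd
  have hm : ∃ m, mk m (m + Nat.find hd) ∈ T := ⟨c, hc⟩
  refine ⟨Nat.find hm, Nat.find hd, hd_pos, Nat.find_spec hm, fun a b hab hlt => ⟨?_, ?_⟩⟩
  · obtain ⟨j, rfl⟩ := Nat.exists_eq_add_of_lt hlt
    have hpow : mk a (a + (c + 1) * (j + 1)) ∈ T :=
      mk_add_mul_mem hT (by rwa [Nat.add_assoc] at hab) (Nat.succ_pos c)
    exact Nat.find_min' hm (mk_add_mem_of_le hT hpow hc (by nlinarith))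
  · have := Nat.find_min' hd ⟨Nat.sub_pos_of_lt hlt, a, by rwa [Nat.add_sub_cancel' hlt.le]⟩
    omega

section Minimal

variable {m d : ℕ}
variable (hT : IsInvSub T) (hd : 0 < d) (hmd : mk m (m + d) ∈ T)
  (hmin : ∀ a b, mk a b ∈ T → a < b → m ≤ a ∧ a + d ≤ b)
include hT hd hmd hmin

theorem exists_eq_mul_of_minimal {a b : ℕ} (hab : mk a b ∈ T) (hle : a ≤ b)
    (hb : m + 2 * d ≤ b) : ∃ t ∈ T, ∃ u ∈ T,
      weight t < weight (mk a b) ∧ weight u < weight (mk a b) ∧ mk a b = t * u := by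
  by_cases ha : m + d ≤ a
  · have h : mk (a - d) a ∈ T :=
      mk_mul_mk_mem hT hmd (mk_self_mem_left hT hab) (by omega) (by omega)
    exact ⟨mk a (a - d), mk_swap_mem hT h, mk (a - d) b,
      mk_mul_mk_mem hT hmd hab (by omega) (by omega), by simp only [weight_mk]; omega,
      by simp only [weight_mk]; omega, (mk_mul_mk_eq (by omega) (by omega)).symm⟩
  · obtain ⟨hma, -⟩ := hmin a b hab (by omega)
    exact ⟨mk a (b - d), mk_mul_mk_mem hT hab (mk_swap_mem hT hmd) (by omega) (by omega),
      mk a (a + d), mk_add_mem_of_le hT hab hmd (by omega), by simp only [weight_mk]; omega,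
      by simp only [weight_mk]; omega, (mk_mul_mk_eq (by omega) (by omega)).symm⟩

theorem invFG_of_minimal : InvFG T := by
  let box : Set Bicyclic := Set.Iio (m + 2 * d) ×ˢ Set.Iio (m + 2 * d)
  refine invFG_of_forall_invGen hT (X := T ∩ box)
    (((Set.finite_Iio _).prod (Set.finite_Iio _)).inter_of_right T) Set.inter_subset_left
    (InvGen.of_forall_eq_mul weight fun s hs hsX => ?_)
  obtain ⟨a, b, rfl⟩ := exists_eq_mk s
  have hab : m + 2 * d ≤ a ∨ m + 2 * d ≤ b := by
    by_contra! h
    exact hsX ⟨hs, (h.1 : a < m + 2 * d), (h.2 : b < m + 2 * d)⟩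
  rcases le_total a b with hle | hle
  · exact exists_eq_mul_of_minimal hT hd hmd hmin hs hle (by omega)
  · obtain ⟨t, ht, u, hu, htw, huw, htu⟩ :=
      exists_eq_mul_of_minimal hT hd hmd hmin (mk_swap_mem hT hs) hle (by omega)
    refine ⟨u⁻¹, hT.inv_mem hu, t⁻¹, hT.inv_mem ht, ?_, ?_, ?_⟩
    · rw [weight_inv, weight_mk]
      rw [weight_mk] at huw
      omega
    · rw [weight_inv, weight_mk]
      rw [weight_mk] at htw
      omega
    · rw [← mul_inv_rev, ← htu, mk_inv]

end Minimal

theorem invFG_of_mem_of_lt (hT : IsInvSub T) {p q : ℕ} (hpq : p < q) (h : mk p q ∈ T) :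
    InvFG T :=
  have ⟨_, _, hd, hmd, hmin⟩ := exists_minimal hT hpq h
  invFG_of_minimal hT hd hmd hmin

end Bicyclic

open Bicyclic in
theorem stmt_9 : Howson Bicyclic := by
  intro U V hU hV hFU hFV
  rcases (U ∩ V).finite_or_infinite with hfin | hinf
  · exact invFG_of_finite (hU.inter hV) hfin
  · obtain ⟨p, q, hpq, hpqUV⟩ := exists_lt_mem_inter_of_infinite hU hV
      (exists_lt_of_invFG_of_infinite hU hFU (hinf.mono Set.inter_subset_left))
      (exists_lt_of_invFG_of_infinite hV hFV (hinf.mono Set.inter_subset_right)) hinf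
    exact invFG_of_mem_of_lt (hU.inter hV) hpq hpqUV
end
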